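/- For every fixed real τ with 0 < τ < 1, the function k ↦ θ(τ, -τ^{k-1}) = Σ_{j=0}^∞ (-1)^j τ^{k·j + j(j-1)/2} is strictly increasing on the interval (0, ∞) of real values of k. -/

import Mathlib

/-- The partial theta function `θ(q,x) = ∑_{j=0}^∞ q^(j(j+1)/2) x^j`. -/
noncomputable def theta (q x : ℝ) : ℝ := ∑' j : ℕ, q ^ (j * (j + 1) / 2) * x ^ j

/-!
Put `F(s) = s θ(q,-s)`. The functional equation `θ(q,x) = 1 + q x θ(q,qx)` gives
`θ(τ,-τ^(k-1)) = 1 - F(τ^k)`, so it suffices that `F` is strictly increasing on `(0,1)`.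
Summing the double series `∑ q^((i+j)(i+j+1)/2) x^i y^j` by antidiagonals and by rows gives
`F(u) - F(v) = (u - v) ∑_j q^(j(j+1)/2) (-v)^j θ(q,-q^j u)`, and the terms `j = 2m, 2m+1` of this
series add up to `q^(m(2m+1)) v^(2m) (1 - (u+v) q^(2m+1) θ(q,-q^(2m+1) u))`. This is positive by
the bound `F(s) ≤ s/(1+qs)` on `[0,1]`, obtained by iterating `F(s) = s - qs² + qs² F(q²s)`,
a contraction for which `s/(1+qs)` is a supersolution.
-/

open Finset Filter Topology

lemma triangle_add (i j : ℕ) :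
    (i + j) * (i + j + 1) / 2 = i * (i + 1) / 2 + j * (j + 1) / 2 + i * j := by
  obtain ⟨a, ha⟩ := Nat.even_mul_succ_self i
  obtain ⟨b, hb⟩ := Nat.even_mul_succ_self j
  have key : (i + j) * (i + j + 1) = i * (i + 1) + j * (j + 1) + 2 * (i * j) := by ring
  rw [key, ha, hb]
  omega

lemma triangle_succ (n : ℕ) : (n + 1) * (n + 1 + 1) / 2 = n * (n + 1) / 2 + (n + 1) := by
  rw [triangle_add n 1]
  ring

lemma self_le_triangle (n : ℕ) : n ≤ n * (n + 1) / 2 := by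
  rcases n with _ | n
  · rfl
  · rw [triangle_succ]
    omega

variable {q : ℝ}

lemma summable_theta_term (hq : |q| < 1) (x : ℝ) :
    Summable fun j : ℕ => q ^ (j * (j + 1) / 2) * x ^ j := by
  refine summable_of_ratio_norm_eventually_le (r := 1 / 2) (by norm_num) ?_
  have hlim : Tendsto (fun n : ℕ => |q| ^ (n + 1) * |x|) atTop (𝓝 0) := by
    simpa [Function.comp_def] using
      ((tendsto_pow_atTop_nhds_zero_of_lt_one (abs_nonneg q) hq).mul_const |x|).comp
        (tendsto_add_atTop_nat 1)
  filter_upwards [hlim.eventually (gt_mem_nhds (by norm_num : (0 : ℝ) < 1 / 2))] with n hn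
  have hstep : ‖q ^ ((n + 1) * (n + 1 + 1) / 2) * x ^ (n + 1)‖
      = |q| ^ (n + 1) * |x| * ‖q ^ (n * (n + 1) / 2) * x ^ n‖ := by
    simp only [norm_mul, norm_pow, Real.norm_eq_abs, triangle_succ, pow_add]
    ring
  rw [hstep]
  exact mul_le_mul_of_nonneg_right hn.le (norm_nonneg _)

lemma theta_eq_one_add (hq : |q| < 1) (x : ℝ) : theta q x = 1 + q * x * theta q (q * x) := by
  rw [theta, (summable_theta_term hq x).tsum_eq_zero_add, theta, ← tsum_mul_left]
  congr 1
  · simp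
  · refine tsum_congr fun n => ?_
    rw [triangle_succ, pow_add, mul_pow]
    ring

lemma abs_theta_le (hq : |q| < 1) {x : ℝ} (hx : |x| ≤ 1) : |theta q x| ≤ (1 - |q|)⁻¹ := by
  have hnorm : Summable fun j : ℕ => ‖q ^ (j * (j + 1) / 2) * x ^ j‖ :=
    (summable_theta_term hq x).norm
  calc |theta q x| ≤ ∑' j : ℕ, ‖q ^ (j * (j + 1) / 2) * x ^ j‖ :=
        norm_tsum_le_tsum_norm hnorm
    _ ≤ ∑' j : ℕ, |q| ^ j := by
      refine hnorm.tsum_le_tsum (fun j => ?_) (summable_geometric_of_lt_one (abs_nonneg q) hq)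
      rw [norm_mul, norm_pow, norm_pow, Real.norm_eq_abs, Real.norm_eq_abs, ← mul_one (|q| ^ j)]
      exact mul_le_mul (pow_le_pow_of_le_one (abs_nonneg q) hq.le (self_le_triangle j))
        (pow_le_one₀ (abs_nonneg x) hx) (by positivity) (by positivity)
    _ = (1 - |q|)⁻¹ := tsum_geometric_of_lt_one (abs_nonneg q) hq

lemma mul_theta_neg_eq (hq : |q| < 1) (s : ℝ) :
    s * theta q (-s) = s - q * s ^ 2 + q * s ^ 2 * (q ^ 2 * s * theta q (-(q ^ 2 * s))) := by
  rw [theta_eq_one_add hq, theta_eq_one_add hq (q * -s)]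
  ring_nf

lemma recursion_le_div_one_add_mul (hq0 : 0 < q) (hq1 : q < 1) {s : ℝ} (hs0 : 0 ≤ s)
    (hs1 : s ≤ 1) :
    s - q * s ^ 2 + q * s ^ 2 * (q ^ 2 * s / (1 + q * (q ^ 2 * s))) ≤ s / (1 + q * s) := by
  have hd₁ : 0 < 1 + q * s := by positivity
  have hd₂ : 0 < 1 + q * (q ^ 2 * s) := by positivity
  have hgap : s / (1 + q * s) - (s - q * s ^ 2 + q * s ^ 2 * (q ^ 2 * s / (1 + q * (q ^ 2 * s))))
      = q ^ 2 * s ^ 3 * (1 - q) * (1 - q ^ 2 * s) / ((1 + q * s) * (1 + q * (q ^ 2 * s))) := by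
    field_simp
    ring
  have hq2s : q ^ 2 * s ≤ 1 := by nlinarith
  have : 0 ≤ q ^ 2 * s ^ 3 * (1 - q) * (1 - q ^ 2 * s)
      / ((1 + q * s) * (1 + q * (q ^ 2 * s))) :=
    div_nonneg (mul_nonneg (mul_nonneg (by positivity) (by linarith)) (by linarith))
      (by positivity)
  linarith

lemma mul_theta_neg_sub_le_pow (hq0 : 0 < q) (hq1 : q < 1) (n : ℕ) {s : ℝ} (hs0 : 0 ≤ s)
    (hs1 : s ≤ 1) : s * theta q (-s) - s / (1 + q * s) ≤ q ^ n * (1 - q)⁻¹ := by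
  have hq : |q| < 1 := by rwa [abs_of_pos hq0]
  induction n generalizing s with
  | zero =>
    have hθ := abs_theta_le hq (x := -s) (by rwa [abs_neg, abs_of_nonneg hs0])
    rw [abs_of_pos hq0] at hθ
    have : s * theta q (-s) ≤ 1 * (1 - q)⁻¹ :=
      (le_abs_self _).trans (by rw [abs_mul, abs_of_nonneg hs0]; gcongr)
    have : 0 ≤ s / (1 + q * s) := by positivity
    simp only [pow_zero]
    linarith
  | succ n ih =>
    have ih' := ih (s := q ^ 2 * s) (by positivity) (by nlinarith)
    have hC : 0 ≤ q ^ n * (1 - q)⁻¹ := mul_nonneg (by positivity) (inv_nonneg.2 (by linarith))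
    have hcontract : q * s ^ 2 * (q ^ n * (1 - q)⁻¹) ≤ q ^ (n + 1) * (1 - q)⁻¹ :=
      calc q * s ^ 2 * (q ^ n * (1 - q)⁻¹) ≤ q * 1 * (q ^ n * (1 - q)⁻¹) := by
            gcongr
            exact pow_le_one₀ hs0 hs1
        _ = q ^ (n + 1) * (1 - q)⁻¹ := by ring
    have := mul_le_mul_of_nonneg_left ih' (by positivity : 0 ≤ q * s ^ 2)
    have := recursion_le_div_one_add_mul hq0 hq1 hs0 hs1
    rw [mul_theta_neg_eq hq s]
    linarith

lemma theta_neg_mul_le_one (hq0 : 0 < q) (hq1 : q < 1) {s : ℝ} (hs0 : 0 < s) (hs1 : s ≤ 1) :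
    theta q (-s) * (1 + q * s) ≤ 1 := by
  have hlim : Tendsto (fun n : ℕ => q ^ n * (1 - q)⁻¹) atTop (𝓝 0) := by
    simpa using (tendsto_pow_atTop_nhds_zero_of_lt_one hq0.le hq1).mul_const (1 - q)⁻¹
  have hle : s * theta q (-s) ≤ s / (1 + q * s) := sub_nonpos.1 <|
    ge_of_tendsto' hlim fun n => mul_theta_neg_sub_le_pow hq0 hq1 n hs0.le hs1
  rw [le_div_iff₀ (by positivity), mul_assoc] at hle
  exact le_of_mul_le_mul_left (by simpa using hle) hs0

lemma add_mul_mul_theta_neg_lt_one (hq0 : 0 < q) (hq1 : q < 1) {u v p : ℝ} (hu0 : 0 < u)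
    (hu1 : u < 1) (hv0 : 0 < v) (hv1 : v < 1) (hp0 : 0 < p) (hpq : p ≤ q) :
    (u + v) * p * theta q (-(u * p)) < 1 := by
  rcases le_or_gt (theta q (-(u * p))) 0 with hθ | hθ
  · have : (u + v) * p * theta q (-(u * p)) ≤ 0 :=
      mul_nonpos_of_nonneg_of_nonpos (by positivity) hθ
    linarith
  · have hlt : (u + v) * p < 1 + q * (u * p) := by
      have hup : u * p ≤ q := by nlinarith
      have hvp : v * p < q := by nlinarith
      nlinarith [mul_le_mul_of_nonneg_right hup (sub_nonneg.2 hq1.le), sq_nonneg (1 - q)]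
    calc (u + v) * p * theta q (-(u * p)) < (1 + q * (u * p)) * theta q (-(u * p)) := by gcongr
      _ ≤ 1 := by
        rw [mul_comm]
        exact theta_neg_mul_le_one hq0 hq1 (by positivity) (by nlinarith)

lemma tsum_prod_eq_tsum_sum_antidiagonal {A α : Type*} [AddCommMonoid A] [HasAntidiagonal A]
    [AddCommMonoid α] [TopologicalSpace α] [ContinuousAdd α] [T3Space α] {f : A × A → α}
    (hf : Summable f) : ∑' p, f p = ∑' n, ∑ p ∈ antidiagonal n, f p := by
  let e := HasAntidiagonal.sigmaAntidiagonalEquivProd (A := A)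
  have hσ : Summable fun c => f (e c) := e.summable_iff.2 hf
  rw [← e.tsum_eq f, hσ.tsum_sigma' fun n => (hasSum_fintype _).summable]
  exact tsum_congr fun n => Finset.tsum_subtype (antidiagonal n) f

noncomputable def thetaDouble (q x y : ℝ) (p : ℕ × ℕ) : ℝ :=
  q ^ ((p.1 + p.2) * (p.1 + p.2 + 1) / 2) * x ^ p.1 * y ^ p.2

lemma summable_thetaDouble (hq : |q| < 1) (x y : ℝ) : Summable (thetaDouble q x y) := by
  refine Summable.of_norm_bounded ((summable_theta_term hq x).norm.mul_of_nonneg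
    (summable_theta_term hq y).norm (fun _ => norm_nonneg _) fun _ => norm_nonneg _) fun p => ?_
  simp only [thetaDouble, norm_mul, norm_pow, Real.norm_eq_abs, triangle_add, pow_add]
  have : |q| ^ (p.1 * p.2) ≤ 1 := pow_le_one₀ (abs_nonneg q) hq.le
  calc _ = |q| ^ (p.1 * (p.1 + 1) / 2) * |x| ^ p.1 * (|q| ^ (p.2 * (p.2 + 1) / 2) * |y| ^ p.2)
        * |q| ^ (p.1 * p.2) := by ring
    _ ≤ _ := mul_le_of_le_one_right (by positivity) this

lemma tsum_thetaDouble_snd (x y : ℝ) (j : ℕ) :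
    ∑' i, thetaDouble q x y (j, i) = q ^ (j * (j + 1) / 2) * x ^ j * theta q (q ^ j * y) := by
  rw [theta, ← tsum_mul_left]
  refine tsum_congr fun i => ?_
  simp only [thetaDouble, triangle_add, pow_add, mul_pow, ← pow_mul]
  ring

lemma mul_sub_mul_sum_thetaDouble_antidiagonal (x y : ℝ) (n : ℕ) :
    (x - y) * ∑ p ∈ antidiagonal n, thetaDouble q x y p
      = x * (q ^ (n * (n + 1) / 2) * x ^ n) - y * (q ^ (n * (n + 1) / 2) * y ^ n) := by
  have hgeom := (Commute.all x y).mul_geom_sum₂ (n + 1)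
  have hrow : ∑ k ∈ range (n + 1), thetaDouble q x y (k, n - k)
      = q ^ (n * (n + 1) / 2) * ∑ k ∈ range (n + 1), x ^ k * y ^ (n + 1 - 1 - k) := by
    rw [mul_sum]
    refine sum_congr rfl fun k hk => ?_
    rw [thetaDouble, Nat.add_sub_cancel' (Nat.le_of_lt_succ (mem_range.1 hk)), Nat.add_sub_cancel,
      mul_assoc]
  rw [Nat.sum_antidiagonal_eq_sum_range_succ_mk, hrow, mul_left_comm, hgeom]
  ring

lemma mul_theta_sub_mul_theta (hq : |q| < 1) (x y : ℝ) :
    x * theta q x - y * theta q y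
      = (x - y) * ∑' j : ℕ, q ^ (j * (j + 1) / 2) * x ^ j * theta q (q ^ j * y) := by
  have hsum := summable_thetaDouble hq x y
  simp_rw [← tsum_thetaDouble_snd, ← hsum.tsum_prod, tsum_prod_eq_tsum_sum_antidiagonal hsum,
    ← tsum_mul_left, mul_sub_mul_sum_thetaDouble_antidiagonal, theta, ← tsum_mul_left]
  exact (((summable_theta_term hq x).mul_left x).tsum_sub
    ((summable_theta_term hq y).mul_left y)).symm

lemma tsum_pos_of_add_pairs_pos {a : ℕ → ℝ} (ha : Summable a)
    (hpair : ∀ m, 0 < a (2 * m) + a (2 * m + 1)) : 0 < ∑' n, a n := by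
  have he : Summable fun m => a (2 * m) := ha.comp_injective fun _ _ h => by omega
  have ho : Summable fun m => a (2 * m + 1) := ha.comp_injective fun _ _ h => by omega
  rw [← tsum_even_add_odd he ho, ← he.tsum_add ho]
  exact (he.add ho).tsum_pos (fun m => (hpair m).le) 0 (hpair 0)

lemma tsum_theta_shift_pos (hq0 : 0 < q) (hq1 : q < 1) {u v : ℝ} (hu0 : 0 < u) (hu1 : u < 1)
    (hv0 : 0 < v) (hv1 : v < 1) :
    0 < ∑' j : ℕ, q ^ (j * (j + 1) / 2) * (-v) ^ j * theta q (q ^ j * -u) := by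
  have hq : |q| < 1 := by rwa [abs_of_pos hq0]
  have hsum : Summable fun j : ℕ => q ^ (j * (j + 1) / 2) * (-v) ^ j * theta q (q ^ j * -u) :=
    (summable_thetaDouble hq (-v) (-u)).prod.congr (tsum_thetaDouble_snd _ _)
  refine tsum_pos_of_add_pairs_pos hsum fun m => ?_
  set p := q ^ (2 * m + 1) with hp
  have hodd : q ^ (2 * m + 1) * -u = -(u * p) := by ring
  have heven : theta q (q ^ (2 * m) * -u) = 1 - u * p * theta q (-(u * p)) := by
    rw [theta_eq_one_add hq, show q * (q ^ (2 * m) * -u) = -(u * p) by rw [hp]; ring]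
    ring
  have hpair : q ^ (2 * m * (2 * m + 1) / 2) * (-v) ^ (2 * m) * theta q (q ^ (2 * m) * -u)
      + q ^ ((2 * m + 1) * (2 * m + 1 + 1) / 2) * (-v) ^ (2 * m + 1)
        * theta q (q ^ (2 * m + 1) * -u)
      = q ^ (2 * m * (2 * m + 1) / 2) * v ^ (2 * m) * (1 - (u + v) * p * theta q (-(u * p))) := by
    rw [heven, hodd, triangle_succ, pow_add, (even_two_mul m).neg_pow,
      (odd_two_mul_add_one m).neg_pow]
    ring
  rw [hpair]
  have hp0 : 0 < p := by positivity
  have hpq : p ≤ q := pow_le_of_le_one hq0.le hq1.le (by omega)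
  exact mul_pos (by positivity)
    (sub_pos.2 (add_mul_mul_theta_neg_lt_one hq0 hq1 hu0 hu1 hv0 hv1 hp0 hpq))

lemma strictMonoOn_mul_theta_neg (hq0 : 0 < q) (hq1 : q < 1) :
    StrictMonoOn (fun s => s * theta q (-s)) (Set.Ioo 0 1) := by
  rintro v ⟨hv0, hv1⟩ u ⟨hu0, hu1⟩ hvu
  have hq : |q| < 1 := by rwa [abs_of_pos hq0]
  have hdiff := mul_theta_sub_mul_theta hq (-v) (-u)
  have hpos := mul_pos (sub_pos.2 hvu) (tsum_theta_shift_pos hq0 hq1 hu0 hu1 hv0 hv1)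
  simp only at hdiff ⊢
  linarith

lemma theta_neg_rpow_sub_one {τ : ℝ} (hτ0 : 0 < τ) (hτ1 : τ < 1) (k : ℝ) :
    theta τ (-(τ ^ (k - 1))) = 1 - τ ^ k * theta τ (-(τ ^ k)) := by
  have hτk : τ * -(τ ^ (k - 1)) = -(τ ^ k) := by
    rw [Real.rpow_sub_one hτ0.ne']
    field_simp
  rw [theta_eq_one_add (by rwa [abs_of_pos hτ0]), hτk]
  ring

theorem stmt_9 (τ : ℝ) (hτ₁ : 0 < τ) (hτ₂ : τ < 1) :
    StrictMonoOn (fun k : ℝ => theta τ (-(τ ^ (k - 1)))) (Set.Ioi (0 : ℝ)) := by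
  intro k₁ hk₁ k₂ hk₂ hlt
  have hmem : ∀ k ∈ Set.Ioi (0 : ℝ), τ ^ k ∈ Set.Ioo 0 1 := fun k hk =>
    ⟨Real.rpow_pos_of_pos hτ₁ k, Real.rpow_lt_one hτ₁.le hτ₂ hk⟩
  have := strictMonoOn_mul_theta_neg hτ₁ hτ₂ (hmem k₂ hk₂) (hmem k₁ hk₁)
    (Real.rpow_lt_rpow_of_exponent_gt hτ₁ hτ₂ hlt)
  simp only [theta_neg_rpow_sub_one hτ₁ hτ₂] at this ⊢
  linarith
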